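/- Let d > 1, p ∈ (1,∞), s ∈ (0,1), δ > 0. Let B, U ⊆ ℝ^d be open sets with U ∩ B_δ ≠ ∅ and U \ B ≠ ∅, where B_δ = {x ∈ B : dist(x, ∂B) > δ}. Let u be a vector field on U ∩ B with ‖u‖_{W^{s,p}(U∩B)} < ∞ whose support is contained in the closure of U ∩ B_δ, and define ũ = u on U ∩ B and ũ = 0 on U \ B. Then there is a constant c, depending only on d, p, s, δ, such that ‖ũ‖_{W^{s,p}(U)} ≤ c ‖u‖_{W^{s,p}(U∩B)}. -/

import Mathlib

open MeasureTheory ENNReal NNReal RealInnerProductSpace Filter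

noncomputable section

abbrev Euc (d : ℕ) : Type := EuclideanSpace ℝ (Fin d)

/-- `∫_D ‖u‖^p` as an extended nonnegative real. -/
def lpIntP (d : ℕ) (p : ℝ) (D : Set (Euc d)) (u : Euc d → Euc d) : ℝ≥0∞ :=
  ∫⁻ x in D, (‖u x‖₊ : ℝ≥0∞) ^ p

/-- The `p`-th power of the fractional Sobolev (Gagliardo) seminorm `|u|_{W^{s,p}(D)}`. -/
def wSemiP (d : ℕ) (s p : ℝ) (D : Set (Euc d)) (u : Euc d → Euc d) : ℝ≥0∞ :=
  ∫⁻ x in D, ∫⁻ y in D,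
    (‖u x - u y‖₊ : ℝ≥0∞) ^ p / (‖x - y‖₊ : ℝ≥0∞) ^ ((d : ℝ) + s * p)

/-- The `p`-th power of the projected seminorm `|u|_{X^{s,p}(D)}`. -/
def xSemiP (d : ℕ) (s p : ℝ) (D : Set (Euc d)) (u : Euc d → Euc d) : ℝ≥0∞ :=
  ∫⁻ x in D, ∫⁻ y in D,
    ENNReal.ofReal (|(inner ℝ (u x - u y) (x - y) : ℝ)| / ‖x - y‖) ^ p
      / (‖x - y‖₊ : ℝ≥0∞) ^ ((d : ℝ) + s * p)

/-- The norm `‖u‖_{W^{s,p}(D)}`. -/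
def wNorm (d : ℕ) (s p : ℝ) (D : Set (Euc d)) (u : Euc d → Euc d) : ℝ≥0∞ :=
  (lpIntP d p D u + wSemiP d s p D u) ^ (1 / p)

/-- The norm `‖u‖_{X^{s,p}(D)}`. -/
def xNorm (d : ℕ) (s p : ℝ) (D : Set (Euc d)) (u : Euc d → Euc d) : ℝ≥0∞ :=
  (lpIntP d p D u + xSemiP d s p D u) ^ (1 / p)

/-- The class `(C^1_c(D))^d` of continuously differentiable vector fields compactly
supported in `D` (viewed as functions on all of `ℝ^d`, extended by zero). -/
def C1c (d : ℕ) (D : Set (Euc d)) : Set (Euc d → Euc d) :=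
  {u | ContDiff ℝ 1 u ∧ HasCompactSupport u ∧ tsupport u ⊆ D}

/-- `W_0^{s,p}(D)`: the closure of `(C^1_c(D))^d` in the norm `‖·‖_{W^{s,p}(D)}`. -/
def W0 (d : ℕ) (s p : ℝ) (D : Set (Euc d)) : Set (Euc d → Euc d) :=
  {u | Measurable u ∧ wNorm d s p D u ≠ ⊤ ∧
    ∃ v : ℕ → Euc d → Euc d, (∀ n, v n ∈ C1c d D) ∧
      Tendsto (fun n => wNorm d s p D (v n - u)) atTop (nhds 0)}

/-- `X_0^{s,p}(D)`: the closure of `(C^1_c(D))^d` in the norm `‖·‖_{X^{s,p}(D)}`. -/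
def X0 (d : ℕ) (s p : ℝ) (D : Set (Euc d)) : Set (Euc d → Euc d) :=
  {u | Measurable u ∧ xNorm d s p D u ≠ ⊤ ∧
    ∃ v : ℕ → Euc d → Euc d, (∀ n, v n ∈ C1c d D) ∧
      Tendsto (fun n => xNorm d s p D (v n - u)) atTop (nhds 0)}

/-- The first `d-1` coordinates `x'` of a point `x ∈ ℝ^d`. -/
def proj' (d : ℕ) (x : Euc d) : Euc (d - 1) :=
  WithLp.toLp 2 (fun i => x (Fin.castLE (Nat.sub_le d 1) i))

/-- The epigraph `{(x', x_d) : x_d > f(x')}` of `f : ℝ^{d-1} → ℝ`. -/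
def epigraph (d : ℕ) (hd : 0 < d) (f : Euc (d - 1) → ℝ) : Set (Euc d) :=
  {x | f (proj' d x) < x ⟨d - 1, Nat.sub_lt hd Nat.one_pos⟩}

/-- The upper half-space `ℝ^d_+`. -/
def halfSpace (d : ℕ) (hd : 0 < d) : Set (Euc d) :=
  {x | 0 < x ⟨d - 1, Nat.sub_lt hd Nat.one_pos⟩}

/-- `D` is a Lipschitz open set with constant `L`. -/
def IsLipschitzSet (d : ℕ) (hd : 0 < d) (L : ℝ) (D : Set (Euc d)) : Prop :=
  ∃ (n : ℕ) (z : Fin n → Euc d) (r : Fin n → ℝ)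
    (f : Fin n → Euc (d - 1) → ℝ) (R : Fin n → (Euc d ≃ᵢ Euc d)),
    (∀ i, z i ∈ frontier D) ∧ (∀ i, 0 < r i) ∧
    (∀ i, LipschitzWith (Real.toNNReal L) (f i)) ∧
    frontier D ⊆ ⋃ i, Metric.ball (z i) (r i) ∧
    (∀ i, R i '' (Metric.ball (z i) (r i) ∩ D) ⊆ epigraph d hd (f i)) ∧
    (∀ i, R i '' (Metric.ball (z i) (r i) ∩ frontier D)
        = R i '' Metric.ball (z i) (r i) ∩ frontier (epigraph d hd (f i)))

/-- `D` is a `C^1` open set. -/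
def IsC1Set (d : ℕ) (hd : 0 < d) (D : Set (Euc d)) : Prop :=
  ∃ (n : ℕ) (z : Fin n → Euc d) (r : Fin n → ℝ)
    (f : Fin n → Euc (d - 1) → ℝ) (R : Fin n → (Euc d ≃ᵢ Euc d)),
    (∀ i, z i ∈ frontier D) ∧ (∀ i, 0 < r i) ∧
    (∀ i, ContDiff ℝ 1 (f i)) ∧
    frontier D ⊆ ⋃ i, Metric.ball (z i) (r i) ∧
    (∀ i, R i '' (Metric.ball (z i) (r i) ∩ D) ⊆ epigraph d hd (f i)) ∧
    (∀ i, R i '' (Metric.ball (z i) (r i) ∩ frontier D)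
        = R i '' Metric.ball (z i) (r i) ∩ frontier (epigraph d hd (f i)))

/-- The constant `C(L) = √(1 + L(L+1))`. -/
def CL (L : ℝ) : ℝ := Real.sqrt (1 + L * (L + 1))

/-- The graph-flattening map `T(x', x_d) = (x', x_d - f(x'))`. -/
def flatten (d : ℕ) (f : Euc (d - 1) → ℝ) (x : Euc d) : Euc d :=
  WithLp.toLp 2 (fun i : Fin d => if (i : ℕ) = d - 1 then x i - f (proj' d x) else x i)

/-- The inverse map `T⁻¹(w', w_d) = (w', w_d + f(w'))`. -/
def shiftGraph (d : ℕ) (f : Euc (d - 1) → ℝ) (w : Euc d) : Euc d :=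
  WithLp.toLp 2 (fun i : Fin d => if (i : ℕ) = d - 1 then w i + f (proj' d w) else w i)

/-- The `p`-th power of the fractional Sobolev seminorm of a scalar function. -/
def wSemiPScalar (d : ℕ) (s p : ℝ) (D : Set (Euc d)) (g : Euc d → ℝ) : ℝ≥0∞ :=
  ∫⁻ x in D, ∫⁻ y in D,
    (‖g x - g y‖₊ : ℝ≥0∞) ^ p / (‖x - y‖₊ : ℝ≥0∞) ^ ((d : ℝ) + s * p)

/-- `B_δ = {x ∈ B : dist(x, ∂B) > δ}`. -/
def innerSet (d : ℕ) (δ : ℝ) (B : Set (Euc d)) : Set (Euc d) :=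
  {x ∈ B | δ < Metric.infDist x (frontier B)}

/-! Extending `u` by zero leaves the integrals over `(U ∩ B)²` unchanged and kills those over
`(U \ B)²`. In the cross terms only points `x` with `u x ≠ 0` contribute; they lie in the closure
of `B_δ`, hence at distance at least `δ` from every `y ∉ B`, so the cross terms are at most
`2 ‖u‖ₚᵖ ∫_{|z| ≥ δ} |z|^{-(d+sp)} dz`, which is finite because `d + sp > d`. -/

section TailKernel

variable {E : Type*} [NormedAddCommGroup E]

def tailKernel (δ r : ℝ) : E → ℝ≥0∞ :=
  {z | δ ≤ ‖z‖}.indicator fun z => ((‖z‖₊ : ℝ≥0∞) ^ r)⁻¹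

theorem measurable_tailKernel [MeasurableSpace E] [OpensMeasurableSpace E] (δ r : ℝ) :
    Measurable (tailKernel (E := E) δ r) :=
  (measurable_nnnorm.coe_nnreal_ennreal.pow_const r).inv.indicator
    (measurableSet_le measurable_const measurable_norm)

variable [NormedSpace ℝ E] [FiniteDimensional ℝ E] [MeasurableSpace E] [BorelSpace E]
  (μ : Measure E) [μ.IsAddHaarMeasure]

/-- On `δ ≤ ‖z‖` the kernel `‖z‖⁻ʳ` is dominated by `(1 + δ⁻¹)ʳ (1 + ‖z‖)⁻ʳ`, which is integrable
as soon as `r` exceeds the dimension. -/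
theorem lintegral_tailKernel_lt_top {δ r : ℝ} (hδ : 0 < δ) (hr : (Module.finrank ℝ E : ℝ) < r) :
    ∫⁻ z, tailKernel δ r z ∂μ < ⊤ := by
  have hr0 : 0 < r := (Nat.cast_nonneg _).trans_lt hr
  set C : ℝ := (1 + δ⁻¹) ^ r
  have hle : ∀ z : E, tailKernel δ r z ≤ ENNReal.ofReal C * ENNReal.ofReal ((1 + ‖z‖) ^ (-r)) := by
    intro z
    by_cases hz : δ ≤ ‖z‖
    · have hz0 : 0 < ‖z‖ := hδ.trans_le hz
      rw [tailKernel, Set.indicator_of_mem (show z ∈ {z : E | δ ≤ ‖z‖} from hz),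
        ← enorm_eq_nnnorm, ← ofReal_norm, ENNReal.ofReal_rpow_of_pos hz0,
        ← ENNReal.ofReal_inv_of_pos (by positivity),
        ← ENNReal.ofReal_mul (by positivity)]
      refine ENNReal.ofReal_le_ofReal ?_
      have hgrow : 1 + ‖z‖ ≤ (1 + δ⁻¹) * ‖z‖ := by
        have : 1 ≤ δ⁻¹ * ‖z‖ := by rw [← inv_mul_cancel₀ hδ.ne']; gcongr
        linarith
      rw [Real.rpow_neg (by positivity), ← div_eq_mul_inv, inv_eq_one_div,
        div_le_div_iff₀ (by positivity) (by positivity), one_mul, ← Real.mul_rpow (by positivity)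
        hz0.le]
      exact Real.rpow_le_rpow (by positivity) hgrow hr0.le
    · simp [tailKernel, hz]
  calc ∫⁻ z, tailKernel δ r z ∂μ
      ≤ ∫⁻ z, ENNReal.ofReal C * ENNReal.ofReal ((1 + ‖z‖) ^ (-r)) ∂μ := lintegral_mono hle
    _ = ENNReal.ofReal C * ∫⁻ z, ENNReal.ofReal ((1 + ‖z‖) ^ (-r)) ∂μ :=
        lintegral_const_mul' _ _ ENNReal.ofReal_ne_top
    _ < ⊤ := ENNReal.mul_lt_top ENNReal.ofReal_lt_top (finite_integral_one_add_norm hr)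

theorem setLIntegral_div_rpow_le_mul_tailKernel {δ r : ℝ} (a : ℝ≥0∞) {x : E} {C : Set E}
    (hC : MeasurableSet C) (hfar : a ≠ 0 → ∀ y ∈ C, δ ≤ dist x y) :
    ∫⁻ y in C, a / (‖x - y‖₊ : ℝ≥0∞) ^ r ∂μ ≤ a * ∫⁻ z, tailKernel δ r z ∂μ := by
  have hpt : ∀ y ∈ C, a / (‖x - y‖₊ : ℝ≥0∞) ^ r ≤ a * tailKernel δ r (x - y) := by
    intro y hy
    rcases eq_or_ne a 0 with rfl | ha
    · simp
    · rw [tailKernel, Set.indicator_of_mem (by simpa [dist_eq_norm] using hfar ha y hy),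
        div_eq_mul_inv]
  calc ∫⁻ y in C, a / (‖x - y‖₊ : ℝ≥0∞) ^ r ∂μ
      ≤ ∫⁻ y in C, a * tailKernel δ r (x - y) ∂μ := setLIntegral_mono' hC hpt
    _ ≤ ∫⁻ y, a * tailKernel δ r (x - y) ∂μ := setLIntegral_le_lintegral _ _
    _ = a * ∫⁻ z, tailKernel δ r z ∂μ := by
        rw [lintegral_const_mul a (f := fun y => tailKernel δ r (x - y))
          ((measurable_tailKernel δ r).comp (measurable_const_sub x)), lintegral_sub_left_eq_self]

end TailKernel

theorem infDist_frontier_le_dist {E : Type*} [NormedAddCommGroup E] [NormedSpace ℝ E]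
    [FiniteDimensional ℝ E] {B : Set E} {x y : E} (hx : x ∈ B) (hy : y ∉ B) :
    Metric.infDist x (frontier B) ≤ dist x y := by
  obtain ⟨w, hw, hxw⟩ :=
    exists_mem_frontier_infDist_compl_eq_dist hx ((Set.ne_univ_iff_exists_notMem B).2 ⟨y, hy⟩)
  calc Metric.infDist x (frontier B) ≤ dist x w := Metric.infDist_le_dist_of_mem hw
    _ = Metric.infDist x Bᶜ := hxw.symm
    _ ≤ dist x y := Metric.infDist_le_dist_of_mem hy

theorem le_dist_of_mem_closure_innerSet {d : ℕ} {δ : ℝ} {B : Set (Euc d)} {x y : Euc d}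
    (hx : x ∈ closure (innerSet d δ B)) (hy : y ∉ B) : δ ≤ dist x y := by
  refine closure_minimal (fun z hz => ?_) (isClosed_le continuous_const
    (continuous_id.dist continuous_const)) hx
  exact hz.2.le.trans (infDist_frontier_le_dist hz.1 hy)

theorem lintegral_lintegral_union_of_symm {α : Type*} [MeasurableSpace α] {μ : Measure α}
    [SFinite μ] {F : α → α → ℝ≥0∞} (hF : Measurable (Function.uncurry F))
    (hsymm : ∀ x y, F x y = F y x) {A C : Set α} (hC : MeasurableSet C) (hAC : Disjoint A C) :
    ∫⁻ x in A ∪ C, ∫⁻ y in A ∪ C, F x y ∂μ ∂μ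
      = ∫⁻ x in A, ∫⁻ y in A, F x y ∂μ ∂μ + 2 * ∫⁻ x in A, ∫⁻ y in C, F x y ∂μ ∂μ
        + ∫⁻ x in C, ∫⁻ y in C, F x y ∂μ ∂μ := by
  have hswap : ∫⁻ x in C, ∫⁻ y in A, F x y ∂μ ∂μ = ∫⁻ x in A, ∫⁻ y in C, F x y ∂μ ∂μ := by
    rw [lintegral_lintegral_swap hF.aemeasurable]
    simp_rw [hsymm]
  simp_rw [lintegral_union hC hAC]
  rw [lintegral_add_left hF.lintegral_prod_right,
    lintegral_add_left hF.lintegral_prod_right, hswap]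
  ring

section ExtensionByZero

variable {d : ℕ} {s p δ : ℝ} {U B : Set (Euc d)} {u : Euc d → Euc d}

theorem lpIntP_indicator (hp : 0 < p) (hB : MeasurableSet B) :
    lpIntP d p U (B.indicator u) = lpIntP d p (U ∩ B) u := by
  have hpow : ∀ x, (‖B.indicator u x‖₊ : ℝ≥0∞) ^ p
      = B.indicator (fun x => (‖u x‖₊ : ℝ≥0∞) ^ p) x := by
    intro x
    by_cases hx : x ∈ B <;> simp [hx, ENNReal.zero_rpow_of_pos hp]
  simp_rw [lpIntP, hpow, lintegral_indicator hB, Measure.restrict_restrict hB, Set.inter_comm]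

theorem lintegral_lintegral_indicator_cross_le (hu : Measurable u) (hU : MeasurableSet U)
    (hB : MeasurableSet B) (hp : 0 < p)
    (hfar : ∀ x ∈ U ∩ B, u x ≠ 0 → ∀ y ∈ U \ B, δ ≤ dist x y) :
    ∫⁻ x in U ∩ B, ∫⁻ y in U \ B, (‖B.indicator u x - B.indicator u y‖₊ : ℝ≥0∞) ^ p
        / (‖x - y‖₊ : ℝ≥0∞) ^ ((d : ℝ) + s * p)
      ≤ (∫⁻ z : Euc d, tailKernel δ (d + s * p) z) * lpIntP d p (U ∩ B) u := by
  have hpt : ∀ x ∈ U ∩ B, ∫⁻ y in U \ B, (‖B.indicator u x - B.indicator u y‖₊ : ℝ≥0∞) ^ p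
      / (‖x - y‖₊ : ℝ≥0∞) ^ ((d : ℝ) + s * p)
      ≤ (‖u x‖₊ : ℝ≥0∞) ^ p * ∫⁻ z : Euc d, tailKernel δ (d + s * p) z := by
    intro x hx
    rw [setLIntegral_congr_fun (hU.diff hB)
      (g := fun y => (‖u x‖₊ : ℝ≥0∞) ^ p / (‖x - y‖₊ : ℝ≥0∞) ^ ((d : ℝ) + s * p)) fun y hy => by
        simp only [Set.indicator_of_mem hx.2, Set.indicator_of_notMem hy.2, sub_zero]]
    refine setLIntegral_div_rpow_le_mul_tailKernel volume _ (hU.diff hB) fun ha => ?_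
    exact hfar x hx fun h0 => ha (by simp [h0, ENNReal.zero_rpow_of_pos hp])
  refine (setLIntegral_mono' (hU.inter hB) hpt).trans_eq ?_
  rw [lintegral_mul_const _ (hu.nnnorm.coe_nnreal_ennreal.pow_const p), lpIntP, mul_comm]

theorem wSemiP_indicator_le (hu : Measurable u) (hU : MeasurableSet U) (hB : MeasurableSet B)
    (hp : 0 < p) (hfar : ∀ x ∈ U ∩ B, u x ≠ 0 → ∀ y ∈ U \ B, δ ≤ dist x y) :
    wSemiP d s p U (B.indicator u) ≤ wSemiP d s p (U ∩ B) u
      + 2 * (∫⁻ z : Euc d, tailKernel δ (d + s * p) z) * lpIntP d p (U ∩ B) u := by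
  set v := B.indicator u
  set κ := ∫⁻ z : Euc d, tailKernel δ (d + s * p) z
  set F : Euc d → Euc d → ℝ≥0∞ :=
    fun x y => (‖v x - v y‖₊ : ℝ≥0∞) ^ p / (‖x - y‖₊ : ℝ≥0∞) ^ ((d : ℝ) + s * p)
  have hv : Measurable v := hu.indicator hB
  have hF : Measurable (Function.uncurry F) := by
    refine Measurable.div ?_ ?_ <;> refine Measurable.pow_const ?_ _
    · exact ((hv.comp measurable_fst).sub (hv.comp measurable_snd)).enorm
    · exact (measurable_fst.sub measurable_snd).enorm
  have hsymm : ∀ x y, F x y = F y x := fun x y => by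
    simp only [F, ← enorm_eq_nnnorm, enorm_sub_rev]
  have hsplit : wSemiP d s p U v = (∫⁻ x in U ∩ B, ∫⁻ y in U ∩ B, F x y)
      + 2 * (∫⁻ x in U ∩ B, ∫⁻ y in U \ B, F x y) + ∫⁻ x in U \ B, ∫⁻ y in U \ B, F x y := by
    conv_lhs => rw [wSemiP, ← Set.inter_union_sdiff U B]
    exact lintegral_lintegral_union_of_symm hF hsymm (hU.diff hB) Set.disjoint_sdiff_inter.symm
  have hinside : ∫⁻ x in U ∩ B, ∫⁻ y in U ∩ B, F x y = wSemiP d s p (U ∩ B) u :=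
    setLIntegral_congr_fun (hU.inter hB) fun x hx => setLIntegral_congr_fun (hU.inter hB)
      fun y hy => by simp only [F, v, Set.indicator_of_mem hx.2, Set.indicator_of_mem hy.2]
  have houtside : ∫⁻ x in U \ B, ∫⁻ y in U \ B, F x y = 0 := by
    refine (setLIntegral_congr_fun (hU.diff hB) fun x hx => ?_).trans lintegral_zero
    refine (setLIntegral_congr_fun (hU.diff hB) fun y hy => ?_).trans lintegral_zero
    simp [F, v, Set.indicator_of_notMem hx.2, Set.indicator_of_notMem hy.2,
      ENNReal.zero_rpow_of_pos hp]
  have hcross : ∫⁻ x in U ∩ B, ∫⁻ y in U \ B, F x y ≤ κ * lpIntP d p (U ∩ B) u :=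
    lintegral_lintegral_indicator_cross_le hu hU hB hp hfar
  rw [hsplit, hinside, houtside, add_zero, mul_assoc]
  gcongr

theorem wNorm_indicator_le (hu : Measurable u) (hU : MeasurableSet U) (hB : MeasurableSet B)
    (hp : 0 < p) (hfar : ∀ x ∈ U ∩ B, u x ≠ 0 → ∀ y ∈ U \ B, δ ≤ dist x y) :
    wNorm d s p U (B.indicator u)
      ≤ (1 + 2 * ∫⁻ z : Euc d, tailKernel δ (d + s * p) z) ^ (1 / p) * wNorm d s p (U ∩ B) u := by
  set κ := ∫⁻ z : Euc d, tailKernel δ (d + s * p) z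
  set L := lpIntP d p (U ∩ B) u
  set S := wSemiP d s p (U ∩ B) u
  rw [wNorm, wNorm, lpIntP_indicator hp hB, ← ENNReal.mul_rpow_of_nonneg _ _ (by positivity)]
  gcongr
  calc L + wSemiP d s p U (B.indicator u) ≤ L + (S + 2 * κ * L) := by
        gcongr; exact wSemiP_indicator_le hu hU hB hp hfar
    _ ≤ (L + S) + 2 * κ * (L + S) := by rw [← add_assoc]; gcongr; exact le_self_add
    _ = (1 + 2 * κ) * (L + S) := by ring

end ExtensionByZero

theorem stmt11_general (d : ℕ) (p s δ : ℝ) (hp : 1 < p) (hs0 : 0 < s) (hδ : 0 < δ) :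
    ∃ c : ℝ, 0 < c ∧ ∀ (B U : Set (Euc d)), IsOpen B → IsOpen U →
      (U ∩ innerSet d δ B).Nonempty → (U \ B).Nonempty →
      ∀ u : Euc d → Euc d, Measurable u →
        wNorm d s p (U ∩ B) u ≠ ⊤ →
        (∀ x ∈ (U ∩ B) \ closure (U ∩ innerSet d δ B), u x = 0) →
        wNorm d s p U (Set.indicator B u) ≤ ENNReal.ofReal c * wNorm d s p (U ∩ B) u := by
  have hp0 : 0 < p := one_pos.trans hp
  set M := (1 + 2 * ∫⁻ z : Euc d, tailKernel δ (d + s * p) z) ^ (1 / p)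
  have hκ : ∫⁻ z : Euc d, tailKernel δ (d + s * p) z ≠ ⊤ :=
    (lintegral_tailKernel_lt_top volume hδ (by
      rw [finrank_euclideanSpace_fin]; linarith [mul_pos hs0 hp0])).ne
  have hM : M ≠ ⊤ := ENNReal.rpow_ne_top_of_nonneg (by positivity) (by finiteness)
  have hM1 : 1 ≤ M := ENNReal.one_le_rpow le_self_add (by positivity)
  refine ⟨M.toReal, ENNReal.toReal_pos (one_pos.trans_le hM1).ne' hM, ?_⟩
  intro B U hB hU _ _ u hu _ hsupp
  rw [ENNReal.ofReal_toReal hM]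
  refine wNorm_indicator_le hu hU.measurableSet hB.measurableSet hp0 fun x hx hux y hy => ?_
  have hxcl : x ∈ closure (innerSet d δ B) :=
    closure_mono Set.inter_subset_right (by_contra fun h => hux (hsupp x ⟨hx, h⟩))
  exact le_dist_of_mem_closure_innerSet hxcl hy.2

theorem stmt11 (d : ℕ) (hd : 1 < d) (p s δ : ℝ) (hp : 1 < p) (hs0 : 0 < s) (hs1 : s < 1)
    (hδ : 0 < δ) :
    ∃ c : ℝ, 0 < c ∧ ∀ (B U : Set (Euc d)), IsOpen B → IsOpen U →
      (U ∩ innerSet d δ B).Nonempty → (U \ B).Nonempty →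
      ∀ u : Euc d → Euc d, Measurable u →
        wNorm d s p (U ∩ B) u ≠ ⊤ →
        (∀ x ∈ (U ∩ B) \ closure (U ∩ innerSet d δ B), u x = 0) →
        wNorm d s p U (Set.indicator B u) ≤ ENNReal.ofReal c * wNorm d s p (U ∩ B) u :=
  stmt11_general d p s δ hp hs0 hδ
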